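/- Let f be a bad binary string with index d₀ = B(f), and suppose α, β are p-critical words for Q_{d₀}(f) with differing coordinates i_1 < i_2 < ... < i_p, where each α_j = α + e_{i_j} contains f as a factor starting at position u_{i_j}. Then for every k ∈ {1,...,p} there exists j ∈ {1,...,p} \ {k} such that i_k lies in the interval [u_{i_j}, u_{i_j} + |f| - 1]. -/

import Mathlib

/-- `occursAt u f k` : the string `f` occurs in `u` starting at (0-based)
position `k`. -/
def occursAt {d m : ℕ} (u : Fin d → Bool) (f : Fin m → Bool) (k : ℕ) : Prop :=
  ∃ _h : k + m ≤ d, ∀ i : Fin m, u ⟨k + i.1, by have := i.2; omega⟩ = f i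

/-- `hasFactor u f` : `f` appears as a factor (consecutive bits) of `u`. -/
def hasFactor {d m : ℕ} (u : Fin d → Bool) (f : Fin m → Bool) : Prop :=
  ∃ k, occursAt u f k

/-- The `d`-dimensional hypercube `Q_d` on binary strings of length `d`. -/
def Qcube (d : ℕ) : SimpleGraph (Fin d → Bool) where
  Adj α β := hammingDist α β = 1
  symm := by constructor; intro a b h; exact (hammingDist_comm _ _).trans h
  loopless := by constructor; intro a h; simp at h

/-- The generalized Fibonacci cube `Q_d(f)`: the subgraph of `Q_d` induced on
the strings avoiding `f` as a factor. -/
def Qgraph (d : ℕ) {m : ℕ} (f : Fin m → Bool) :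
    SimpleGraph {u : Fin d → Bool // ¬ hasFactor u f} where
  Adj a b := hammingDist a.1 b.1 = 1
  symm := by constructor; intro a b h; exact (hammingDist_comm _ _).trans h
  loopless := by constructor; intro a h; simp at h

/-- `Q_d(f)` is an isometric subgraph of `Q_d`: internal distances equal
Hamming distances. -/
def IsIsometric (d : ℕ) {m : ℕ} (f : Fin m → Bool) : Prop :=
  ∀ a b : {u : Fin d → Bool // ¬ hasFactor u f},
    (Qgraph d f).dist a b = hammingDist a.1 b.1

/-- `f` is good: `Q_d(f)` is isometric in `Q_d` for all `d ≥ 1`. -/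
def Good {m : ℕ} (f : Fin m → Bool) : Prop := ∀ d, 1 ≤ d → IsIsometric d f

/-- `f` is bad: `Q_d(f)` is not isometric in `Q_d` for some `d ≥ 1`. -/
def Bad {m : ℕ} (f : Fin m → Bool) : Prop := ∃ d, 1 ≤ d ∧ ¬ IsIsometric d f

/-- The index `B(f)`: the smallest `d` with `Q_d(f)` not isometric in `Q_d`. -/
noncomputable def Bindex {m : ℕ} (f : Fin m → Bool) : ℕ :=
  sInf {d | ¬ IsIsometric d f}

/-- Flip the `i`-th bit of `α`. -/
def flipBit {d : ℕ} (α : Fin d → Bool) (i : Fin d) : Fin d → Bool :=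
  Function.update α i (!(α i))

/-- `α, β` are `p`-critical words for `Q_d(f)`. -/
def pCritical (d : ℕ) {m : ℕ} (f : Fin m → Bool) (p : ℕ)
    (α β : Fin d → Bool) : Prop :=
  ¬ hasFactor α f ∧ ¬ hasFactor β f ∧ hammingDist α β = p ∧ 2 ≤ p ∧
    ((∀ i, α i ≠ β i → hasFactor (flipBit α i) f) ∨
     (∀ i, α i ≠ β i → hasFactor (flipBit β i) f))

/-!
Suppose some differing coordinate `k` of the critical pair lies in no window `[u j, u j + |f|)`
with `j ≠ k`. Each window contains its own `j` (otherwise `f` would already occur in `α`), so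
every window of a differing coordinate lies entirely to the left or entirely to the right of `k`.
Cutting `α` and `β` at `k` and keeping the side containing a second differing coordinate gives a
shorter pair of `f`-free words in which every flip towards the other word still creates `f`.
Then `Q_c(f)` is not isometric for some `c < B(f)`, contradicting minimality.
-/

lemma exists_ne_of_two_le_hammingDist {d : ℕ} {α β : Fin d → Bool}
    (h : 2 ≤ hammingDist α β) (k : Fin d) : ∃ j, α j ≠ β j ∧ j ≠ k := by
  obtain ⟨j, hj, hjk⟩ :=
    Finset.exists_mem_ne (s := Finset.univ.filter fun i => α i ≠ β i) h k
  exact ⟨j, (Finset.mem_filter.mp hj).2, hjk⟩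

lemma hammingDist_le_hammingDist_flipBit {d : ℕ} {α β : Fin d → Bool} {s : Fin d}
    (h : α s = β s) : hammingDist α β ≤ hammingDist (flipBit α s) β := by
  refine Finset.card_le_card fun i hi => ?_
  rw [Finset.mem_filter] at hi ⊢
  have his : i ≠ s := by rintro rfl; exact hi.2 h
  rwa [flipBit, Function.update_of_ne his]

lemma eq_flipBit_of_hammingDist_eq_one {d : ℕ} {α γ : Fin d → Bool}
    (h : hammingDist α γ = 1) : ∃ s, γ = flipBit α s := by
  obtain ⟨s, hs⟩ := Finset.card_eq_one.mp h
  have hdiff : ∀ i, α i ≠ γ i ↔ i = s := fun i => by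
    rw [← Finset.mem_singleton, ← hs, Finset.mem_filter]
    simp
  refine ⟨s, funext fun i => ?_⟩
  by_cases his : i = s
  · subst his
    have := (hdiff i).mpr rfl
    rw [flipBit, Function.update_self]
    cases hα : α i <;> simp_all
  · rw [flipBit, Function.update_of_ne his]
    exact (not_not.mp (mt (hdiff i).mp his)).symm

lemma hammingDist_le_length {d m : ℕ} {f : Fin m → Bool}
    {x y : {w : Fin d → Bool // ¬ hasFactor w f}} (p : (Qgraph d f).Walk x y) :
    hammingDist x.1 y.1 ≤ p.length := by
  induction p with
  | nil => simp
  | @cons x v y hadj q ih =>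
      have hxv : hammingDist x.1 v.1 = 1 := hadj
      have := hammingDist_triangle x.1 v.1 y.1
      rw [SimpleGraph.Walk.length_cons]
      omega

/-- A geodesic of `Q_d(f)` from `α` to `β` must start by flipping a coordinate where `α` and `β`
differ, and every such flip leaves `Q_d(f)`. -/
lemma not_isometric_of_forall_flipBit_hasFactor {d m : ℕ} {f : Fin m → Bool}
    {α β : Fin d → Bool} (hα : ¬ hasFactor α f) (hβ : ¬ hasFactor β f) (hne : α ≠ β)
    (hflip : ∀ s, α s ≠ β s → hasFactor (flipBit α s) f) : ¬ IsIsometric d f := by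
  intro hiso
  have hdist : (Qgraph d f).dist ⟨α, hα⟩ ⟨β, hβ⟩ = hammingDist α β := hiso _ _
  obtain ⟨p, hp⟩ := SimpleGraph.exists_walk_of_dist_ne_zero (G := Qgraph d f)
    (u := ⟨α, hα⟩) (v := ⟨β, hβ⟩) (by rw [hdist]; exact hammingDist_ne_zero.mpr hne)
  rw [hdist] at hp
  cases p with
  | nil => exact hne rfl
  | @cons _ γ _ hadj q =>
    rw [SimpleGraph.Walk.length_cons] at hp
    obtain ⟨s, hγ⟩ := eq_flipBit_of_hammingDist_eq_one (show hammingDist α γ.1 = 1 from hadj)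
    by_cases hs : α s = β s
    · have hgrow := hammingDist_le_hammingDist_flipBit (β := β) hs
      have hq : hammingDist γ.1 β ≤ q.length := hammingDist_le_length q
      rw [← hγ] at hgrow
      omega
    · exact γ.2 (hγ ▸ hflip s hs)

lemma le_and_lt_of_occursAt_flipBit {d m : ℕ} {f : Fin m → Bool} {α : Fin d → Bool}
    (hα : ¬ hasFactor α f) {j : Fin d} {w : ℕ} (hocc : occursAt (flipBit α j) f w) :
    w ≤ j ∧ j.1 < w + m := by
  obtain ⟨hw, hf⟩ := hocc
  by_contra hout
  refine hα ⟨w, hw, fun i => ?_⟩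
  have hij : (⟨w + i.1, by omega⟩ : Fin d) ≠ j := fun h => hout (by
    have := congrArg Fin.val h; simp only at this; omega)
  rw [← hf i, flipBit, Function.update_of_ne hij]

def slice {d : ℕ} (α : Fin d → Bool) (o : ℕ) {c : ℕ} (h : o + c ≤ d) : Fin c → Bool :=
  fun x => α ⟨o + x, by omega⟩

lemma hasFactor_of_hasFactor_slice {d m c o : ℕ} {f : Fin m → Bool} {α : Fin d → Bool}
    (h : o + c ≤ d) (hs : hasFactor (slice α o h) f) : hasFactor α f := by
  obtain ⟨v, hv, hf⟩ := hs
  exact ⟨o + v, by omega, fun i => by rw [← hf i]; simp only [slice, Nat.add_assoc]⟩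

lemma slice_flipBit {d c o : ℕ} (α : Fin d → Bool) (h : o + c ≤ d) (s : Fin c) :
    slice (flipBit α ⟨o + s, by omega⟩) o h = flipBit (slice α o h) s := by
  funext x
  by_cases hxs : x = s
  · subst hxs
    simp [slice, flipBit]
  · have : (⟨o + x, by omega⟩ : Fin d) ≠ ⟨o + s, by omega⟩ := fun e =>
      hxs (Fin.ext (by simpa using e))
    simp only [slice, flipBit, Function.update_of_ne this, Function.update_of_ne hxs]

lemma occursAt_slice {d m c o : ℕ} {f : Fin m → Bool} {α : Fin d → Bool} (h : o + c ≤ d)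
    {w : ℕ} (hocc : occursAt α f w) (how : o ≤ w) (hwc : w + m ≤ o + c) :
    occursAt (slice α o h) f (w - o) := by
  obtain ⟨_, hf⟩ := hocc
  refine ⟨by omega, fun i => ?_⟩
  rw [← hf i]
  simp only [slice]
  congr 2
  omega

lemma not_isometric_of_slice {d m c o : ℕ} {f : Fin m → Bool} {α β : Fin d → Bool}
    (h : o + c ≤ d) (hα : ¬ hasFactor α f) (hβ : ¬ hasFactor β f)
    (hne : ∃ j : Fin d, α j ≠ β j ∧ o ≤ j ∧ j.1 < o + c)
    (hflip : ∀ j : Fin d, α j ≠ β j → o ≤ j → j.1 < o + c →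
      ∃ w, occursAt (flipBit α j) f w ∧ o ≤ w ∧ w + m ≤ o + c) :
    ¬ IsIsometric c f := by
  refine not_isometric_of_forall_flipBit_hasFactor
    (mt (hasFactor_of_hasFactor_slice h) hα) (mt (hasFactor_of_hasFactor_slice h) hβ) ?_ ?_
  · obtain ⟨j, hj, hoj, hjc⟩ := hne
    intro heq
    have hj' : (⟨o + (j - o), by omega⟩ : Fin d) = j := Fin.ext (by simp only; omega)
    exact hj (hj' ▸ congrFun heq ⟨j - o, by omega⟩)
  · intro s hs
    obtain ⟨w, hocc, how, hwc⟩ := hflip ⟨o + s, by omega⟩ hs (by simp) (by simp)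
    rw [← slice_flipBit]
    exact ⟨w - o, occursAt_slice h hocc how hwc⟩

theorem stmt_7_general (m : ℕ) (f : Fin m → Bool)
    (d₀ : ℕ) (hd₀ : d₀ = Bindex f) (p : ℕ) (α β : Fin d₀ → Bool)
    (hα : ¬ hasFactor α f) (hβ : ¬ hasFactor β f)
    (hH : hammingDist α β = p) (hp : 2 ≤ p)
    (u : Fin d₀ → ℕ)
    (hu : ∀ i, α i ≠ β i → occursAt (flipBit α i) f (u i)) :
    ∀ k : Fin d₀, α k ≠ β k →
      ∃ j : Fin d₀, α j ≠ β j ∧ j ≠ k ∧ u j ≤ k.1 ∧ k.1 < u j + m := by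
  intro k _
  by_contra! hcover
  have hmin : ∀ c, ¬ IsIsometric c f → d₀ ≤ c := fun c hc => hd₀ ▸ Nat.sInf_le hc
  have hwin : ∀ j, α j ≠ β j → u j ≤ j ∧ j.1 < u j + m := fun j hj =>
    le_and_lt_of_occursAt_flipBit hα (hu j hj)
  have hleft : ∀ j, α j ≠ β j → j.1 < k → u j + m ≤ k := fun j hj hjk => by
    have := hwin j hj
    exact hcover j hj (Fin.ne_of_val_ne hjk.ne) (by omega)
  have hright : ∀ j, α j ≠ β j → k.1 < j → k < u j := fun j hj hkj => by
    have := hwin j hj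
    by_contra!
    have := hcover j hj (Fin.ne_of_val_ne hkj.ne') this
    omega
  obtain ⟨j₀, hj₀, hj₀k⟩ := exists_ne_of_two_le_hammingDist (hH ▸ hp) k
  rcases Fin.lt_or_lt_of_ne hj₀k with hlt | hgt
  · have := hmin k <| not_isometric_of_slice (o := 0) (by omega) hα hβ
      ⟨j₀, hj₀, by omega, by omega⟩ fun j hj _ hjk =>
        ⟨u j, hu j hj, by omega, by have := hleft j hj (by omega); omega⟩
    omega
  · have := hmin (d₀ - (k + 1)) <| not_isometric_of_slice (o := k + 1) (by omega) hα hβ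
      ⟨j₀, hj₀, by omega, by omega⟩ fun j hj hkj _ =>
        ⟨u j, hu j hj, hright j hj hkj, by obtain ⟨_, _⟩ := hu j hj; omega⟩
    omega

/-- Lemma 3.1: for `p`-critical words `α, β` for `Q_{B(f)}(f)`, every differing
coordinate `k` lies in the occurrence interval `[u_j, u_j + |f| - 1]` of the
copy of `f` created by flipping some other differing coordinate `j`. -/
theorem stmt_7 (m : ℕ) (f : Fin m → Bool) (hBad : Bad f)
    (d₀ : ℕ) (hd₀ : d₀ = Bindex f) (p : ℕ) (α β : Fin d₀ → Bool)
    (hα : ¬ hasFactor α f) (hβ : ¬ hasFactor β f)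
    (hH : hammingDist α β = p) (hp : 2 ≤ p)
    (u : Fin d₀ → ℕ)
    (hu : ∀ i, α i ≠ β i → occursAt (flipBit α i) f (u i)) :
    ∀ k : Fin d₀, α k ≠ β k →
      ∃ j : Fin d₀, α j ≠ β j ∧ j ≠ k ∧ u j ≤ k.1 ∧ k.1 < u j + m :=
  stmt_7_general m f d₀ hd₀ p α β hα hβ hH hp u hu
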